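/- With F of characteristic 3, G = T_{3m}, m = 3k+1, and s the sum of all 3-elements of G, the ideal Ann_{FG}(s) satisfies Ann_{FG}(s)^3 = 0, i.e., the product of any three elements of Ann_{FG}(s) is zero. -/

import Mathlib

/-- Relations of the presentation `T_{3m} = ⟨x, y | x^m = y^3 = 1, y⁻¹xy = x^t⟩`. -/
def T3mRels (m t : ℕ) : Set (FreeGroup (Fin 2)) :=
  {FreeGroup.of 0 ^ m, FreeGroup.of 1 ^ 3,
   (FreeGroup.of 1)⁻¹ * FreeGroup.of 0 * FreeGroup.of 1 * (FreeGroup.of 0 ^ t)⁻¹}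

/-- The group `T_{3m}` given by the presentation `⟨x, y | x^m = y^3 = 1, y⁻¹xy = x^t⟩`. -/
abbrev T3m (m t : ℕ) : Type := PresentedGroup (T3mRels m t)

/-- The generator `x` of `T_{3m}`. -/
def xg (m t : ℕ) : T3m m t := PresentedGroup.of 0

/-- The generator `y` of `T_{3m}`. -/
def yg (m t : ℕ) : T3m m t := PresentedGroup.of 1

/-! Write `E = x̂` and `Y = y` in `FG`. As `m ≡ 1 (mod 3)`, `E` is idempotent, and it commutes
with `Y` since conjugation by `y` permutes the powers of `x`. For `N = E (Y - 1)`, characteristic 3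
gives `N³ = E (Y³ - 1) = 0` and `s = (1 - E) + N²`, so `u s = 0` forces `u = u E` and `u N² = 0`.
Left multiplication by `x` fixes `E`, `N`, `N²` and by `y` is unitriangular on them, so `u E`
lies in their span; and `N² ≠ 0`, as its image in `F[C₃]` under `T_{3m} → C₃` shows. Thus
`Ann(s)` is spanned by `N` and `N²`, so a product of three of its elements is a combination of
powers `N^j` with `j ≥ 3`. -/

open Finset Submodule MonoidAlgebra

section GeomSum

variable {A : Type*} [Ring A] {X : A} {m : ℕ}

theorem pow_mul_geom_sum_of_pow_eq_one (hX : X ^ m = 1) (j : ℕ) :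
    X ^ j * ∑ i ∈ range m, X ^ i = ∑ i ∈ range m, X ^ i := by
  have h : X * ∑ i ∈ range m, X ^ i = ∑ i ∈ range m, X ^ i := by
    have := mul_geom_sum X m
    rwa [hX, sub_self, sub_mul, one_mul, sub_eq_zero] at this
  induction j with
  | zero => rw [pow_zero, one_mul]
  | succ j ih => rw [pow_succ', mul_assoc, ih, h]

theorem geom_sum_mul_pow_of_pow_eq_one (hX : X ^ m = 1) (j : ℕ) :
    (∑ i ∈ range m, X ^ i) * X ^ j = ∑ i ∈ range m, X ^ i := by
  have h : (∑ i ∈ range m, X ^ i) * X = ∑ i ∈ range m, X ^ i := by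
    have := geom_sum_mul X m
    rwa [hX, sub_self, mul_sub, mul_one, sub_eq_zero] at this
  induction j with
  | zero => rw [pow_zero, mul_one]
  | succ j ih => rw [pow_succ, ← mul_assoc, ih, h]

theorem isIdempotentElem_geom_sum (hm : (m : A) = 1) (hX : X ^ m = 1) :
    IsIdempotentElem (∑ i ∈ range m, X ^ i) := by
  rw [IsIdempotentElem, sum_mul]
  simp_rw [pow_mul_geom_sum_of_pow_eq_one hX, sum_const, card_range, nsmul_eq_mul, hm, one_mul]

theorem geom_sum_pow_eq_geom_sum (hm : (m : A) = 1) (hX : X ^ m = 1) {a b : ℕ}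
    (hab : (X ^ a) ^ b = X) : ∑ i ∈ range m, (X ^ a) ^ i = ∑ i ∈ range m, X ^ i := by
  have hXa : (X ^ a) ^ m = 1 := by rw [← pow_mul, mul_comm, pow_mul, hX, one_pow]
  have hX_mul : ∀ i, X ^ i * ∑ j ∈ range m, (X ^ a) ^ j = ∑ j ∈ range m, (X ^ a) ^ j := by
    intro i
    calc X ^ i * ∑ j ∈ range m, (X ^ a) ^ j
        = (X ^ a) ^ (b * i) * ∑ j ∈ range m, (X ^ a) ^ j := by rw [pow_mul, hab]
      _ = ∑ j ∈ range m, (X ^ a) ^ j := pow_mul_geom_sum_of_pow_eq_one hXa _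
  -- each sum absorbs the powers of the other one's base, so their product equals both
  calc ∑ i ∈ range m, (X ^ a) ^ i
      = (∑ i ∈ range m, X ^ i) * ∑ j ∈ range m, (X ^ a) ^ j := by
        simp_rw [sum_mul, hX_mul, sum_const, card_range, nsmul_eq_mul, hm, one_mul]
    _ = ∑ i ∈ range m, X ^ i := by
        simp_rw [mul_sum, ← pow_mul, geom_sum_mul_pow_of_pow_eq_one hX, sum_const,
          card_range, nsmul_eq_mul, hm, one_mul]

end GeomSum

section Span

variable {R A : Type*} [CommSemiring R] [Semiring A] [Algebra R A]

theorem Submodule.mul_mem_span_of_forall_mul_mem {B : Set A} {c w : A}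
    (h : ∀ b ∈ B, c * b ∈ span R B) (hw : w ∈ span R B) : c * w ∈ span R B := by
  induction hw using span_induction with
  | mem b hb => exact h b hb
  | zero => rw [mul_zero]; exact zero_mem _
  | add v w _ _ hv hw => rw [mul_add]; exact add_mem hv hw
  | smul a v _ hv => rw [mul_smul_comm]; exact smul_mem _ a hv

theorem mul_mul_eq_zero_of_mem_span_pair {N α β γ : A} (hN : N ^ 3 = 0)
    (hα : α ∈ span R {N, N ^ 2}) (hβ : β ∈ span R {N, N ^ 2}) (hγ : γ ∈ span R {N, N ^ 2}) :
    α * β * γ = 0 := by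
  obtain ⟨a₁, b₁, rfl⟩ := mem_span_pair.mp hα
  obtain ⟨a₂, b₂, rfl⟩ := mem_span_pair.mp hβ
  obtain ⟨a₃, b₃, rfl⟩ := mem_span_pair.mp hγ
  rw [pow_three, ← mul_assoc] at hN
  simp only [sq, add_mul, mul_add, smul_mul_smul_comm, ← mul_assoc, hN, zero_mul, smul_zero,
    add_zero]

end Span

theorem mem_span_pair_of_mul_eq_zero {F A : Type*} [Field F] [Ring A] [Algebra F A] {E N u : A}
    (hE : IsIdempotentElem E) (hEN : E * N = N) (hNE : N * E = N) (hN : N ^ 3 = 0)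
    (hN2 : N ^ 2 ≠ 0) (huE : u * E ∈ span F {E, N, N ^ 2}) (hu : u * (1 - E + N ^ 2) = 0) :
    u ∈ span F {N, N ^ 2} := by
  have huN2 : u * N ^ 2 = 0 :=
    calc u * N ^ 2 = u * (1 - E + N ^ 2) * E := by
          rw [mul_assoc, add_mul, sub_mul, one_mul, hE.eq, sub_self, zero_add, sq, mul_assoc,
            hNE]
      _ = 0 := by rw [hu, zero_mul]
  have hu_eq : u = u * E := by
    rwa [mul_add, huN2, add_zero, mul_sub, mul_one, sub_eq_zero] at hu
  obtain ⟨a, w, hw, hw_eq⟩ := mem_span_insert.mp huE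
  have hwN2 : w * N ^ 2 = 0 := by
    rw [sq, ← mul_assoc]
    exact mul_mul_eq_zero_of_mem_span_pair hN hw (subset_span (by simp)) (subset_span (by simp))
  have ha : a = 0 := by
    have h := congrArg (· * N ^ 2) hw_eq
    rw [← hu_eq, huN2, add_mul, hwN2, add_zero, smul_mul_assoc, sq, ← mul_assoc, hEN, ← sq] at h
    exact (smul_eq_zero.mp h.symm).resolve_right hN2
  rwa [hu_eq, hw_eq, ha, zero_smul, zero_add]

section IdempotentMulSubOne

variable {A : Type*} [Ring A] {E Y : A}

theorem mul_mem_span_of_mul_eq_self {R : Type*} [CommSemiring R] [Algebra R A] {X w : A}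
    (hXE : X * E = E) (hw : w ∈ span R {E, E * (Y - 1), (E * (Y - 1)) ^ 2}) :
    X * w ∈ span R {E, E * (Y - 1), (E * (Y - 1)) ^ 2} := by
  refine mul_mem_span_of_forall_mul_mem ?_ hw
  rintro _ (rfl | rfl | rfl) <;> simp only [sq, ← mul_assoc, hXE] <;> exact subset_span (by simp)

theorem Commute.mul_mul_sub_one_pow (hEY : Commute E Y) (k : ℕ) :
    Y * (E * (Y - 1) ^ k) = E * (Y - 1) ^ (k + 1) + E * (Y - 1) ^ k := by
  rw [← mul_assoc, ← hEY.eq, mul_assoc, ← mul_add]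
  congr 1
  calc Y * (Y - 1) ^ k = (Y - 1 + 1) * (Y - 1) ^ k := by rw [sub_add_cancel]
    _ = (Y - 1) ^ (k + 1) + (Y - 1) ^ k := by rw [add_mul, one_mul, pow_succ']

variable (hE : IsIdempotentElem E) (hEY : Commute E Y)
include hE hEY

theorem IsIdempotentElem.mul_sub_one_pow_succ (k : ℕ) :
    (E * (Y - 1)) ^ (k + 1) = E * (Y - 1) ^ (k + 1) := by
  rw [(hEY.sub_right (Commute.one_right E)).mul_pow, hE.pow_succ_eq]

theorem IsIdempotentElem.mul_sub_one_mul_self : E * (Y - 1) * E = E * (Y - 1) := by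
  rw [mul_assoc, ← (hEY.sub_right (Commute.one_right E)).eq, ← mul_assoc, hE.eq]

end IdempotentMulSubOne

section CharThree

variable {A : Type*} [Ring A] [CharP A 3] {E Y : A}

theorem sub_one_pow_three_eq_zero (hY : Y ^ 3 = 1) : (Y - 1) ^ 3 = 0 := by
  rw [sub_pow_char_of_commute 3 (Commute.one_right Y), hY, one_pow, sub_self]

theorem sub_one_sq_eq_sq_add_self_add_one (Y : A) : (Y - 1) ^ 2 = Y ^ 2 + Y + 1 := by
  have h : (Y - 1) ^ 2 = Y ^ 2 + Y + 1 - 3 * Y := by noncomm_ring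
  rw [h, show (3 : A) = 0 by exact_mod_cast CharP.cast_eq_zero A 3, zero_mul, sub_zero]

variable (hE : IsIdempotentElem E) (hEY : Commute E Y)
include hE hEY

theorem IsIdempotentElem.mul_sub_one_pow_three (hY : Y ^ 3 = 1) : (E * (Y - 1)) ^ 3 = 0 := by
  rw [hE.mul_sub_one_pow_succ hEY 2, sub_one_pow_three_eq_zero hY, mul_zero]

theorem IsIdempotentElem.mul_sq_add_one_add_mul :
    E * Y ^ 2 + 1 + E * Y = 1 - E + (E * (Y - 1)) ^ 2 := by
  rw [hE.mul_sub_one_pow_succ hEY 1, sub_one_sq_eq_sq_add_self_add_one]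
  noncomm_ring

theorem IsIdempotentElem.mul_mem_span_of_pow_three_eq_one (hY : Y ^ 3 = 1) {R : Type*}
    [CommSemiring R] [Algebra R A] {w : A} (hw : w ∈ span R {E, E * (Y - 1), (E * (Y - 1)) ^ 2}) :
    Y * w ∈ span R {E, E * (Y - 1), (E * (Y - 1)) ^ 2} := by
  refine mul_mem_span_of_forall_mul_mem ?_ hw
  have hN2 := hE.mul_sub_one_pow_succ hEY 1
  rintro _ (rfl | rfl | rfl)
  · have h := hEY.mul_mul_sub_one_pow 0
    rw [pow_zero, mul_one, zero_add, pow_one] at h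
    rw [h]
    exact add_mem (subset_span (by simp)) (subset_span (by simp))
  · have h := hEY.mul_mul_sub_one_pow 1
    rw [pow_one, ← hN2] at h
    rw [h]
    exact add_mem (subset_span (by simp)) (subset_span (by simp))
  · rw [hN2, hEY.mul_mul_sub_one_pow 2, sub_one_pow_three_eq_zero hY, mul_zero, zero_add]
    exact subset_span (by simp)

end CharThree

namespace MonoidAlgebra

instance {R M : Type*} [Field R] [Monoid M] (p : ℕ) [CharP R p] : CharP (MonoidAlgebra R M) p :=
  charP_of_injective_algebraMap' R p

theorem mul_mem_of_closure_eq_top {R M : Type*} [CommSemiring R] [Monoid M] {S : Set M}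
    (hS : Submonoid.closure S = ⊤) {W : Submodule R (MonoidAlgebra R M)}
    (hW : ∀ s ∈ S, ∀ w ∈ W, of R M s * w ∈ W) (u : MonoidAlgebra R M) {w : MonoidAlgebra R M}
    (hw : w ∈ W) : u * w ∈ W := by
  have hof : ∀ g, ∀ w ∈ W, of R M g * w ∈ W := by
    intro g
    induction (hS ▸ Submonoid.mem_top g : g ∈ Submonoid.closure S) using
      Submonoid.closure_induction with
    | mem s hs => exact hW s hs
    | one => intro w hw; rwa [map_one, one_mul]
    | mul g h _ _ hg hh => intro w hw; rw [map_mul, mul_assoc]; exact hg _ (hh w hw)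
  induction u using MonoidAlgebra.induction_on with
  | of g => exact hof g w hw
  | add u v hu hv => rw [add_mul]; exact add_mem hu hv
  | smul a u hu => rw [smul_mul_assoc]; exact smul_mem W a hu

theorem commute_geom_sum_of_inv_mul_mul_eq_pow {R G : Type*} [CommRing R] [Group G] {x y : G}
    {m t : ℕ} (hm : (m : R) = 1) (hx : x ^ m = 1) (hxy : y⁻¹ * x * y = x ^ t)
    (ht : t ^ 3 % m = 1 % m) : Commute (∑ i ∈ range m, of R G x ^ i) (of R G y) := by
  have hmA : (m : MonoidAlgebra R G) = 1 := by
    rw [← map_natCast (algebraMap R (MonoidAlgebra R G)), hm, map_one]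
  have hXm : of R G x ^ m = 1 := by rw [← map_pow, hx, map_one]
  have hconj : of R G y⁻¹ * (∑ i ∈ range m, of R G x ^ i) * of R G y =
      ∑ i ∈ range m, (of R G x ^ t) ^ i := by
    rw [mul_sum, sum_mul]
    refine sum_congr rfl fun i _ => ?_
    rw [← map_pow, ← map_pow, ← map_pow, ← map_mul, ← map_mul, ← hxy]
    exact congrArg _ (by simpa using (conj_pow (a := y⁻¹) (b := x) (i := i)).symm)
  have hsum : ∑ i ∈ range m, (of R G x ^ t) ^ i = ∑ i ∈ range m, of R G x ^ i := by
    refine geom_sum_pow_eq_geom_sum hmA hXm (b := t ^ 2) ?_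
    rw [← pow_mul, ← pow_succ', pow_eq_pow_mod _ hXm, ht, ← pow_eq_pow_mod _ hXm, pow_one]
  calc (∑ i ∈ range m, of R G x ^ i) * of R G y
      = of R G y * (of R G y⁻¹ * (∑ i ∈ range m, of R G x ^ i) * of R G y) := by
        rw [← mul_assoc, ← mul_assoc, ← map_mul, mul_inv_cancel, map_one, one_mul]
    _ = of R G y * ∑ i ∈ range m, of R G x ^ i := by rw [hconj, hsum]

theorem of_ofAdd_one_sub_one_sq_ne_zero (R : Type*) [CommRing R] [Nontrivial R] :
    (of R (Multiplicative (ZMod 3)) (.ofAdd 1) - 1) ^ 2 ≠ 0 := by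
  have hg : (Multiplicative.ofAdd 1 : Multiplicative (ZMod 3)) ^ 2 ≠ 1 := by decide
  intro h
  rw [sub_sq, ← map_pow, one_pow, mul_one, two_mul] at h
  have h1 := congrArg (fun f : MonoidAlgebra R (Multiplicative (ZMod 3)) => f.coeff 1) h
  simp [coeff_sub, coeff_add, of_apply, one_def, hg] at h1

theorem geom_sum_mul_sub_one_sq_ne_zero {R G : Type*} [CommRing R] [Nontrivial R] [Group G]
    (φ : G →* Multiplicative (ZMod 3)) {x y : G} (hx : φ x = 1) (hy : φ y = .ofAdd 1) {m : ℕ}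
    (hm : (m : R) = 1) : ((∑ i ∈ range m, of R G x ^ i) * (of R G y - 1)) ^ 2 ≠ 0 := by
  intro h
  have hof : ∀ g, mapDomainRingHom R φ (of R G g) = of R _ (φ g) := fun g => by simp [of_apply]
  have h1 := congrArg (mapDomainRingHom R φ) h
  simp only [map_pow, map_mul, map_sum, map_sub, map_one, map_zero, hof, hx, hy, one_pow,
    sum_const, card_range, ← Nat.cast_smul_eq_nsmul R, hm, one_smul, one_mul] at h1
  exact of_ofAdd_one_sub_one_sq_ne_zero R h1

end MonoidAlgebra

namespace T3m

section Group

variable (m t : ℕ)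

theorem xg_pow : xg m t ^ m = 1 := by
  change PresentedGroup.mk _ (FreeGroup.of 0) ^ m = 1
  rw [← map_pow]
  exact PresentedGroup.one_of_mem (by simp [T3mRels])

theorem yg_pow : yg m t ^ 3 = 1 := by
  change PresentedGroup.mk _ (FreeGroup.of 1) ^ 3 = 1
  rw [← map_pow]
  exact PresentedGroup.one_of_mem (by simp [T3mRels])

theorem yg_inv_mul_xg_mul_yg : (yg m t)⁻¹ * xg m t * yg m t = xg m t ^ t := by
  apply mul_inv_eq_one.mp
  change (PresentedGroup.mk _ (FreeGroup.of 1))⁻¹ * PresentedGroup.mk _ (FreeGroup.of 0) *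
    PresentedGroup.mk _ (FreeGroup.of 1) * (PresentedGroup.mk _ (FreeGroup.of 0) ^ t)⁻¹ = 1
  rw [← map_pow, ← map_inv, ← map_inv, ← map_mul, ← map_mul, ← map_mul]
  exact PresentedGroup.one_of_mem (by simp [T3mRels])

theorem closure_xg_yg : Subgroup.closure {xg m t, yg m t} = ⊤ := by
  rw [← PresentedGroup.closure_range_of]
  congr 1
  ext g
  simp [Fin.exists_fin_two, xg, yg, eq_comm]

theorem submonoid_closure_xg_yg (hm : 0 < m) : Submonoid.closure {xg m t, yg m t} = ⊤ := by
  rw [← Subgroup.closure_toSubmonoid_of_isOfFinOrder, closure_xg_yg, Subgroup.top_toSubmonoid]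
  rintro g (rfl | rfl)
  · exact isOfFinOrder_iff_pow_eq_one.mpr ⟨m, hm, xg_pow m t⟩
  · exact isOfFinOrder_iff_pow_eq_one.mpr ⟨3, by norm_num, yg_pow m t⟩

def toZMod3 : T3m m t →* Multiplicative (ZMod 3) :=
  PresentedGroup.toGroup (f := ![1, .ofAdd 1]) <| by
    rintro r (rfl | rfl | rfl)
    · simp
    · simp only [map_pow, FreeGroup.lift_apply_of]
      decide
    · simp

theorem toZMod3_xg : toZMod3 m t (xg m t) = 1 := PresentedGroup.toGroup.of _

theorem toZMod3_yg : toZMod3 m t (yg m t) = .ofAdd 1 := PresentedGroup.toGroup.of _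

end Group

section GroupAlgebra

variable {F : Type*} [Field F] {m t : ℕ}

variable (F m t) in
noncomputable def xhat : MonoidAlgebra F (T3m m t) := ∑ i ∈ range m, of F _ (xg m t ^ i)

theorem xhat_eq_geom_sum : xhat F m t = ∑ i ∈ range m, of F _ (xg m t) ^ i := by
  simp only [xhat, map_pow]

theorem of_yg_pow : of F (T3m m t) (yg m t) ^ 3 = 1 := by
  rw [← map_pow, yg_pow, map_one]

theorem of_xg_mul_xhat : of F _ (xg m t) * xhat F m t = xhat F m t := by
  have hX : of F _ (xg m t) ^ m = 1 := by rw [← map_pow, xg_pow, map_one]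
  simpa only [xhat_eq_geom_sum, pow_one] using pow_mul_geom_sum_of_pow_eq_one hX 1

theorem isIdempotentElem_xhat (hm : (m : F) = 1) : IsIdempotentElem (xhat F m t) := by
  rw [xhat_eq_geom_sum]
  refine isIdempotentElem_geom_sum ?_ (by rw [← map_pow, xg_pow, map_one])
  rw [← map_natCast (algebraMap F _), hm, map_one]

theorem commute_xhat_of_yg (hm : (m : F) = 1) (ht : t ^ 3 % m = 1 % m) :
    Commute (xhat F m t) (of F _ (yg m t)) := by
  rw [xhat_eq_geom_sum]
  exact commute_geom_sum_of_inv_mul_mul_eq_pow hm (xg_pow m t) (yg_inv_mul_xg_mul_yg m t) ht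

variable [CharP F 3] (hm : (m : F) = 1) (ht : t ^ 3 % m = 1 % m)
include hm ht

theorem mul_xhat_mem_span (u : MonoidAlgebra F (T3m m t)) :
    u * xhat F m t ∈ span F {xhat F m t, xhat F m t * (of F _ (yg m t) - 1),
      (xhat F m t * (of F _ (yg m t) - 1)) ^ 2} := by
  have hm0 : 0 < m := Nat.pos_of_ne_zero (by rintro rfl; simp at hm)
  refine mul_mem_of_closure_eq_top (submonoid_closure_xg_yg m t hm0) ?_ u (subset_span (by simp))
  rintro _ (rfl | rfl) w hw
  · exact mul_mem_span_of_mul_eq_self of_xg_mul_xhat hw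
  · exact (isIdempotentElem_xhat hm).mul_mem_span_of_pow_three_eq_one
      (commute_xhat_of_yg hm ht) of_yg_pow hw

theorem mem_span_of_mul_eq_zero {u : MonoidAlgebra F (T3m m t)}
    (hu : u * (xhat F m t * of F _ (yg m t)⁻¹ + 1 + xhat F m t * of F _ (yg m t)) = 0) :
    u ∈ span F {xhat F m t * (of F _ (yg m t) - 1),
      (xhat F m t * (of F _ (yg m t) - 1)) ^ 2} := by
  have hE := isIdempotentElem_xhat (t := t) hm
  have hEY := commute_xhat_of_yg hm ht
  have hy_inv : (yg m t)⁻¹ = yg m t ^ 2 :=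
    inv_eq_of_mul_eq_one_right (by rw [← pow_succ', yg_pow])
  rw [hy_inv, map_pow, hE.mul_sq_add_one_add_mul hEY] at hu
  have hN2 : (xhat F m t * (of F _ (yg m t) - 1)) ^ 2 ≠ 0 := by
    rw [xhat_eq_geom_sum]
    exact geom_sum_mul_sub_one_sq_ne_zero (toZMod3 m t) (toZMod3_xg m t) (toZMod3_yg m t) hm
  exact mem_span_pair_of_mul_eq_zero hE (by rw [← mul_assoc, hE.eq])
    (hE.mul_sub_one_mul_self hEY) (hE.mul_sub_one_pow_three hEY of_yg_pow) hN2
    (mul_xhat_mem_span hm ht u) hu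

end GroupAlgebra

end T3m

theorem ann_s_cube_zero_general (F : Type*) [Field F] [CharP F 3] (m t k : ℕ)
    (hm : m = 3 * k + 1) (ht : t ^ 3 % m = 1 % m) :
    letI G := T3m m t
    letI xhat : MonoidAlgebra F G := ∑ i ∈ Finset.range m, MonoidAlgebra.of F G (xg m t ^ i)
    letI s : MonoidAlgebra F G :=
      xhat * MonoidAlgebra.of F G (yg m t)⁻¹ + 1 + xhat * MonoidAlgebra.of F G (yg m t)
    ∀ α β γ : MonoidAlgebra F G,
      (α * s = 0 ∧ s * α = 0) → (β * s = 0 ∧ s * β = 0) → (γ * s = 0 ∧ s * γ = 0) →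
        α * β * γ = 0 := by
  intro α β γ hα hβ hγ
  have hmF : (m : F) = 1 := by
    rw [hm, Nat.cast_add, Nat.cast_mul, CharP.cast_eq_zero F 3, zero_mul, zero_add, Nat.cast_one]
  have hN3 := (T3m.isIdempotentElem_xhat hmF).mul_sub_one_pow_three
    (T3m.commute_xhat_of_yg hmF ht) T3m.of_yg_pow
  exact mul_mul_eq_zero_of_mem_span_pair hN3 (T3m.mem_span_of_mul_eq_zero hmF ht hα.1)
    (T3m.mem_span_of_mul_eq_zero hmF ht hβ.1) (T3m.mem_span_of_mul_eq_zero hmF ht hγ.1)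

/-- For `F` of characteristic 3, `G = T_{3m}` and `s` the sum of all 3-elements of `G`,
the product of any three elements of `Ann_{FG}(s)` vanishes: `Ann_{FG}(s)³ = 0`. -/
theorem ann_s_cube_zero (F : Type*) [Field F] [CharP F 3] (m t k : ℕ) (ht1 : 1 ≤ t)
    (hm : m = 3 * k + 1) (ht : t ^ 3 % m = 1 % m) (hgcd : Nat.gcd m (t - 1) = 1) :
    letI G := T3m m t
    letI xhat : MonoidAlgebra F G := ∑ i ∈ Finset.range m, MonoidAlgebra.of F G (xg m t ^ i)
    letI s : MonoidAlgebra F G :=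
      xhat * MonoidAlgebra.of F G (yg m t)⁻¹ + 1 + xhat * MonoidAlgebra.of F G (yg m t)
    ∀ α β γ : MonoidAlgebra F G,
      (α * s = 0 ∧ s * α = 0) → (β * s = 0 ∧ s * β = 0) → (γ * s = 0 ∧ s * γ = 0) →
        α * β * γ = 0 :=
  ann_s_cube_zero_general F m t k hm ht
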